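/- arXiv:1809.02273 — 7 statements merged into one kernel-verified Lean document; each statement's English description precedes it below -/
import Mathlib

section
/- Let E be a nilpotent, torsion-free, non-abelian group. Then E contains elements a, b, c with c = [a,b] (the commutator aba⁻¹b⁻¹), a·c = c·a, b·c = c·b, and a, b, c all of infinite order; that is, E contains a subgroup isomorphic to the discrete Heisenberg group. -/
/-- A predicate to express that a group is torsion-free (the old Mathlib definition). -/
def Monoid.IsTorsionFree (G : Type*) [Monoid G] : Prop :=
  ∀ g : G, g ≠ 1 → ¬IsOfFinOrder g

/-! An element `a` of the second centre `Z₂(E)` that is not central has a nontrivial commutator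
`c = [a, b]` with some `b`, and `c` is central; torsion-freeness makes `a`, `b`, `c` of infinite
order. Such an `a` exists because `Z₂(E) = Z(E)` would force the upper central series to stop at
`Z(E)`, which for a nilpotent group means `Z(E) = E`. -/

open scoped commutatorElement

namespace Subgroup

theorem exists_commutatorElement_ne_one_mem_center {G : Type*} [Group G]
    [Group.IsNilpotent G] (h : ¬ ∀ a b : G, a * b = b * a) :
    ∃ a b : G, ⁅a, b⁆ ≠ 1 ∧ ⁅a, b⁆ ∈ center G := by
  have hcenter : center G ≠ ⊤ := fun htop ↦
    h fun a b ↦ mem_center_iff.mp (htop ▸ mem_top b) a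
  have hlt : upperCentralSeries G 1 < upperCentralSeries G 2 :=
    (upperCentralSeries_mono G one_le_two).lt_of_ne fun heq ↦
      hcenter (upperCentralSeries_one G ▸ upperCentralSeries.eq_top (by decide) heq)
  obtain ⟨a, ha₂, ha₁⟩ := SetLike.exists_of_lt hlt
  obtain ⟨b, hab⟩ : ∃ b : G, ⁅a, b⁆ ≠ 1 := by
    by_contra! hcomm
    rw [upperCentralSeries_one, mem_center_iff] at ha₁
    exact ha₁ fun b ↦ (commutatorElement_eq_one_iff_mul_comm.mp (hcomm b)).symm
  exact ⟨a, b, hab, upperCentralSeries_one G ▸ mem_upperCentralSeries_succ_iff.mp ha₂ b⟩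

end Subgroup

/-- A nilpotent, torsion-free, non-abelian group contains elements `a, b, c` with
`c = [a,b]`, `a` and `b` commuting with `c`, and `a`, `b`, `c` of infinite order;
i.e. it contains a copy of the discrete Heisenberg group. -/
theorem nilpotent_torsionFree_nonabelian_contains_heisenberg
    (E : Type*) [Group E] [Group.IsNilpotent E]
    (htf : Monoid.IsTorsionFree E)
    (hna : ¬ ∀ a b : E, a * b = b * a) :
    ∃ a b c : E, c = a * b * a⁻¹ * b⁻¹ ∧ a * c = c * a ∧ b * c = c * b ∧
      ¬ IsOfFinOrder a ∧ ¬ IsOfFinOrder b ∧ ¬ IsOfFinOrder c := by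
  obtain ⟨a, b, hc, hcentral⟩ := Subgroup.exists_commutatorElement_ne_one_mem_center hna
  have ha : a ≠ 1 := by rintro rfl; exact hc (commutatorElement_one_left b)
  have hb : b ≠ 1 := by rintro rfl; exact hc (commutatorElement_one_right a)
  exact ⟨a, b, ⁅a, b⁆, commutatorElement_def a b, Subgroup.mem_center_iff.mp hcentral a,
    Subgroup.mem_center_iff.mp hcentral b, htf a ha, htf b hb, htf _ hc⟩
end

section
/- Suppose a, b, c ∈ GL_n(ℂ) satisfy [a,b] = c, ac = ca, bc = cb, and c has infinite order. Then a and c cannot both be diagonalizable. -/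
open Matrix

/-- `M` is diagonalizable over `ℂ` if it is conjugate to a diagonal matrix. -/
def IsDiagonalizable {n : ℕ} (M : Matrix (Fin n) (Fin n) ℂ) : Prop :=
  ∃ P : GL (Fin n) ℂ, (((P : Matrix (Fin n) (Fin n) ℂ) * M * (↑P⁻¹ : Matrix (Fin n) (Fin n) ℂ))).IsDiag

/-!
Since `a` and `b` commute with `c`, they preserve every eigenspace `E` of `c`, on which `c` acts
as a scalar `μ`. On `E` the relation `a b = c b a` becomes `a b = μ • b a`, and taking
determinants gives `μ ^ dim E = 1`. Hence every eigenvalue of `c` is an `n!`-th root of unity,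
so a diagonalizable `c` satisfies `c ^ n! = 1`.
-/

open Module Module.End
open scoped Nat

theorem LinearMap.pow_finrank_eq_one_of_mul_eq_smul_mul {R M : Type*} [CommRing R]
    [AddCommGroup M] [Module R M] [Module.Free R M] {f g : End R M} (hf : IsUnit f)
    (hg : IsUnit g) {μ : R} (hfg : f * g = μ • (g * f)) : μ ^ finrank R M = 1 := by
  have hdet := congrArg LinearMap.det hfg
  rw [LinearMap.det_smul, map_mul, map_mul, mul_comm (LinearMap.det g)] at hdet
  exact ((hf.map LinearMap.det).mul (hg.map LinearMap.det)).mul_eq_right.mp hdet.symm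

theorem LinearMap.isUnit_restrict {R M : Type*} [Semiring R] [AddCommMonoid M] [Module R M]
    {f : (End R M)ˣ} {p : Submodule R M} (hf : ∀ x ∈ p, (f : End R M) x ∈ p)
    (hf' : ∀ x ∈ p, (↑f⁻¹ : End R M) x ∈ p) : IsUnit ((f : End R M).restrict hf) :=
  ⟨⟨_, LinearMap.restrict _ hf', by ext x; exact LinearMap.congr_fun f.mul_inv x,
    by ext x; exact LinearMap.congr_fun f.inv_mul x⟩, rfl⟩

namespace Module.End

variable {K V : Type*} [Field K] [AddCommGroup V] [Module K V]

theorem apply_mem_eigenspace_of_commute {f h : End K V} (hfh : Commute f h) (μ : K) :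
    ∀ x ∈ h.eigenspace μ, f x ∈ h.eigenspace μ :=
  fun _ hx ↦ mapsTo_genEigenspace_of_comm hfh.symm μ 1 hx

theorem isUnit_restrict_eigenspace_of_commute {f h : End K V} (hf : IsUnit f)
    (hfh : Commute f h) (μ : K) :
    IsUnit (f.restrict (apply_mem_eigenspace_of_commute hfh μ)) := by
  obtain ⟨u, rfl⟩ := hf
  exact LinearMap.isUnit_restrict _ (apply_mem_eigenspace_of_commute hfh.units_inv_left μ)

theorem pow_finrank_eigenspace_eq_one {f g h : End K V} (hf : IsUnit f) (hg : IsUnit g)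
    (hfg : f * g = h * (g * f)) (hfh : Commute f h) (hgh : Commute g h) (μ : K) :
    μ ^ finrank K (h.eigenspace μ) = 1 := by
  refine LinearMap.pow_finrank_eq_one_of_mul_eq_smul_mul
    (isUnit_restrict_eigenspace_of_commute hf hfh μ)
    (isUnit_restrict_eigenspace_of_commute hg hgh μ) ?_
  ext x
  simp only [mul_apply, LinearMap.coe_restrict_apply, LinearMap.smul_apply, Submodule.coe_smul]
  rw [← mul_apply f, hfg, mul_apply, mul_apply]
  exact mem_eigenspace_iff.mp <| apply_mem_eigenspace_of_commute hgh μ _ <|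
    apply_mem_eigenspace_of_commute hfh μ _ x.2

theorem pow_factorial_finrank_eq_one_of_mem_spectrum [FiniteDimensional K V] {f g h : End K V}
    (hf : IsUnit f) (hg : IsUnit g) (hfg : f * g = h * (g * f)) (hfh : Commute f h)
    (hgh : Commute g h) {μ : K} (hμ : μ ∈ spectrum K h) : μ ^ (finrank K V)! = 1 := by
  have hpos : 0 < finrank K (h.eigenspace μ) :=
    Submodule.one_le_finrank_iff.mpr (hasEigenvalue_iff_mem_spectrum.mpr hμ)
  obtain ⟨m, hm⟩ := Nat.dvd_factorial hpos (Submodule.finrank_le _)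
  rw [hm, pow_mul, pow_finrank_eigenspace_eq_one hf hg hfg hfh hgh, one_pow]

end Module.End

theorem IsDiagonalizable.pow_eq_one_of_forall_mem_spectrum {n : ℕ}
    {M : Matrix (Fin n) (Fin n) ℂ} (hM : IsDiagonalizable M) {N : ℕ}
    (h : ∀ μ ∈ spectrum ℂ M, μ ^ N = 1) : M ^ N = 1 := by
  obtain ⟨P, hP⟩ := hM
  set D := (P : Matrix (Fin n) (Fin n) ℂ) * M * (↑P⁻¹ : Matrix (Fin n) (Fin n) ℂ) with hD
  set d := D.diag
  have hdiag : D = diagonal d := hP.diagonal_diag.symm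
  have hDN : D ^ N = 1 := by
    rw [hdiag, diagonal_pow, ← diagonal_one]
    congr 1
    ext i
    apply h
    rw [← spectrum.units_conjugate (u := P), ← hD, hdiag, spectrum_diagonal]
    exact Set.mem_range_self i
  rwa [hD, Units.conj_pow, Units.mul_inv_eq_one, P.isUnit.mul_eq_left] at hDN

/-- If `a, b, c ∈ GL_n(ℂ)` satisfy `[a,b] = c`, `ac = ca`, `bc = cb`, and `c` has infinite
order, then `a` and `c` cannot both be diagonalizable. -/
theorem not_both_diagonalizable {n : ℕ} (a b c : GL (Fin n) ℂ)
    (hc : c = a * b * a⁻¹ * b⁻¹) (hac : a * c = c * a) (hbc : b * c = c * b)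
    (hord : ¬ IsOfFinOrder c) :
    ¬ (IsDiagonalizable (a : Matrix (Fin n) (Fin n) ℂ) ∧
        IsDiagonalizable (c : Matrix (Fin n) (Fin n) ℂ)) := by
  rintro ⟨-, hcdiag⟩
  have hrel : a * b = c * (b * a) := by rw [hc]; group
  let e := Matrix.toLinAlgEquiv' (R := ℂ) (n := Fin n)
  have hroot : ∀ μ ∈ spectrum ℂ (c : Matrix (Fin n) (Fin n) ℂ), μ ^ n ! = 1 := by
    intro μ hμ
    rw [← AlgEquiv.spectrum_eq e] at hμ
    simpa only [finrank_fin_fun] using pow_factorial_finrank_eq_one_of_mem_spectrum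
      (a.isUnit.map e) (b.isUnit.map e) (by simp only [← map_mul, ← Units.val_mul, hrel])
      ((Commute.units_val hac).map e) ((Commute.units_val hbc).map e) hμ
  refine hord (isOfFinOrder_iff_pow_eq_one.mpr ⟨n !, n.factorial_pos, Units.ext ?_⟩)
  simpa only [Units.val_pow_eq_pow_val, Units.val_one] using
    hcdiag.pow_eq_one_of_forall_mem_spectrum hroot
end

section
/- Every nilpotent, torsion-free, non-abelian subgroup of GL_n(ℂ) contains a non-diagonalizable element. -/
open Matrix

/-
If `G` is nilpotent and non-abelian, some commutator `c = ⁅a, b⁆ ≠ 1` is central, so that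
`a b a⁻¹ = c b`. The eigenspace `E` of `c` for an eigenvalue `μ` is stable under `a` and `b`,
and on it the relation reads `a b a⁻¹ = μ b`; taking determinants gives `μ ^ dim E = 1`.
So all eigenvalues of `c` are roots of unity, and if `c` were diagonalizable it would have
finite order, contradicting torsion-freeness.
-/

open scoped commutatorElement
open Module

theorem Group.exists_commutatorElement_ne_one_mem_center {H : Type*} [Group H]
    [Group.IsNilpotent H] (h : ¬ ∀ a b : H, a * b = b * a) :
    ∃ a b : H, ⁅a, b⁆ ≠ 1 ∧ ⁅a, b⁆ ∈ Subgroup.center H := by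
  have hlt : Subgroup.upperCentralSeries H 1 < Subgroup.upperCentralSeries H 2 := by
    refine (Subgroup.upperCentralSeries_mono H one_le_two).lt_of_ne fun heq => h ?_
    have htop := Subgroup.upperCentralSeries.eq_top (by norm_num) heq
    rw [Subgroup.upperCentralSeries_one] at htop
    exact fun a b => Subgroup.mem_center_iff.mp (htop ▸ Subgroup.mem_top b) a
  obtain ⟨a, ha₂, ha₁⟩ := SetLike.exists_of_lt hlt
  rw [Subgroup.upperCentralSeries_one, Subgroup.mem_center_iff] at ha₁
  push Not at ha₁
  obtain ⟨b, hb⟩ := ha₁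
  refine ⟨a, b, ?_, ?_⟩
  · rw [Ne, commutatorElement_eq_one_iff_mul_comm]
    exact fun h => hb h.symm
  · rw [← Subgroup.upperCentralSeries_one]
    exact Subgroup.mem_upperCentralSeries_succ_iff.mp ha₂ b

namespace Module.End

variable {K V : Type*} [Field K] [AddCommGroup V] [Module K V] [FiniteDimensional K V]

theorem pow_finrank_eigenspace_eq_one_s3 {a b c : End K V} (ha : IsUnit a) (hb : IsUnit b)
    (hca : Commute c a) (hcb : Commute c b) (habc : a * b = c * b * a) (μ : K) :
    μ ^ finrank K (c.eigenspace μ) = 1 := by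
  have hmaps {f : End K V} (hcf : Commute c f) :
      ∀ x ∈ c.eigenspace μ, f x ∈ c.eigenspace μ := fun x hx => by
    rw [mem_eigenspace_iff] at hx ⊢
    rw [← Module.End.mul_apply, hcf.eq, Module.End.mul_apply, hx, map_smul]
  set a' := a.restrict (hmaps hca)
  set b' := b.restrict (hmaps hcb)
  have hdet {f : End K V} (hf : IsUnit f) (hcf : Commute c f) :
      LinearMap.det (f.restrict (hmaps hcf)) ≠ 0 := by
    refine (LinearMap.isUnit_det _ ?_).ne_zero
    rw [Module.End.isUnit_iff] at hf ⊢
    have hinj : Function.Injective (f.restrict (hmaps hcf)) := fun x y hxy =>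
      Subtype.ext (hf.injective (congrArg Subtype.val hxy))
    exact ⟨hinj, LinearMap.injective_iff_surjective.mp hinj⟩
  have hrel : a' * b' = μ • (b' * a') := by
    ext x
    have hx := mem_eigenspace_iff.mp (hmaps hcb _ (hmaps hca _ x.2))
    simp only [a', b', Module.End.mul_apply, LinearMap.coe_restrict_apply, LinearMap.smul_apply,
      Submodule.coe_smul]
    rw [← hx, ← Module.End.mul_apply, ← Module.End.mul_apply, ← Module.End.mul_apply, habc]
  have := congrArg LinearMap.det hrel
  rw [LinearMap.det_smul, map_mul, map_mul, mul_comm (LinearMap.det b')] at this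
  exact (mul_eq_right₀ (mul_ne_zero (hdet ha hca) (hdet hb hcb))).mp this.symm

theorem isOfFinOrder_of_mem_spectrum_map_commutatorElement {H : Type*} [Group H]
    (ρ : H →* End K V) {a b : H} (ha : Commute ⁅a, b⁆ a) (hb : Commute ⁅a, b⁆ b) {μ : K}
    (hμ : μ ∈ spectrum K (ρ ⁅a, b⁆)) : IsOfFinOrder μ := by
  have habc : ρ a * ρ b = ρ ⁅a, b⁆ * ρ b * ρ a := by
    simp only [← map_mul, commutatorElement_def, inv_mul_cancel_right]
  have hpos : 0 < finrank K ((ρ ⁅a, b⁆).eigenspace μ) :=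
    Submodule.one_le_finrank_iff.mpr (hasEigenvalue_iff_mem_spectrum.mpr hμ)
  exact isOfFinOrder_iff_pow_eq_one.mpr ⟨_, hpos, pow_finrank_eigenspace_eq_one_s3
    ((Group.isUnit a).map ρ) ((Group.isUnit b).map ρ) (ha.map ρ) (hb.map ρ) habc μ⟩

end Module.End

theorem IsDiagonalizable.isOfFinOrder {n : ℕ} {M : Matrix (Fin n) (Fin n) ℂ}
    (hM : IsDiagonalizable M) (h : ∀ μ ∈ spectrum ℂ M, IsOfFinOrder μ) : IsOfFinOrder M := by
  obtain ⟨P, hP⟩ := hM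
  set D := (P : Matrix (Fin n) (Fin n) ℂ) * M * (↑P⁻¹ : Matrix (Fin n) (Fin n) ℂ)
  have hspec : spectrum ℂ M = Set.range D.diag := by
    rw [← spectrum.units_conjugate (u := P), ← spectrum_diagonal, hP.diagonal_diag]
  have hDfin : IsOfFinOrder D := by
    rw [← hP.diagonal_diag]
    exact (diagonalRingHom (Fin n) ℂ).toMonoidHom.isOfFinOrder
      (IsOfFinOrder.pi fun i => h _ (hspec ▸ Set.mem_range_self i))
  exact (IsConj.symm ⟨P, P.mk_semiconjBy M⟩).isOfFinOrder hDfin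

/-- Every nilpotent, torsion-free, non-abelian subgroup of `GL_n(ℂ)` contains a
non-diagonalizable element. -/
theorem nilpotent_torsionFree_nonabelian_has_nondiagonalizable {n : ℕ}
    (G : Subgroup (GL (Fin n) ℂ)) [Group.IsNilpotent G]
    (htf : Monoid.IsTorsionFree G)
    (hna : ¬ ∀ a b : G, a * b = b * a) :
    ∃ g ∈ G, ¬ IsDiagonalizable (g : Matrix (Fin n) (Fin n) ℂ) := by
  by_contra! hdiag
  obtain ⟨a, b, hne, hcen⟩ := Group.exists_commutatorElement_ne_one_mem_center hna
  let ρ : G →* Module.End ℂ (Fin n → ℂ) :=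
    toLinAlgEquiv'.toMonoidHom.comp ((Units.coeHom _).comp G.subtype)
  have hfin : IsOfFinOrder (((⁅a, b⁆ : G) : GL (Fin n) ℂ) : Matrix (Fin n) (Fin n) ℂ) :=
    (hdiag _ ⁅a, b⁆.2).isOfFinOrder fun μ hμ =>
      Module.End.isOfFinOrder_of_mem_spectrum_map_commutatorElement ρ
        (Subgroup.mem_center_iff.mp hcen a).symm (Subgroup.mem_center_iff.mp hcen b).symm
        (by rwa [← AlgEquiv.spectrum_eq toLinAlgEquiv'] at hμ)
  exact htf _ hne (Submonoid.isOfFinOrder_coe.mp (Units.isOfFinOrder_val.mp hfin))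
end

section
/- Let G be a subgroup of the upper triangular invertible n×n complex matrices. If every element of G is diagonalizable, then G is abelian. -/
open Matrix

open Polynomial

lemma diag_mul_tri {n : ℕ} {A B : Matrix (Fin n) (Fin n) ℂ}
    (hA : A.BlockTriangular id) (hB : B.BlockTriangular id) (i : Fin n) :
    (A * B) i i = A i i * B i i := by
  rw [Matrix.mul_apply]
  apply Finset.sum_eq_single_of_mem i (Finset.mem_univ i)
  intro j _ hj
  rcases lt_or_gt_of_ne hj with h | h
  · rw [hA (show id j < id i from h), zero_mul]
  · rw [hB (show id i < id j from h), mul_zero]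

lemma charpoly_conj {n : ℕ} (P : GL (Fin n) ℂ) (M : Matrix (Fin n) (Fin n) ℂ) :
    ((P : Matrix (Fin n) (Fin n) ℂ) * M * (↑P⁻¹ : Matrix (Fin n) (Fin n) ℂ)).charpoly
      = M.charpoly := by
  have hPQ : (P : Matrix (Fin n) (Fin n) ℂ) * (↑P⁻¹ : Matrix (Fin n) (Fin n) ℂ) = 1 := by
    rw [← Units.val_mul, mul_inv_cancel, Units.val_one]
  have hQP : (↑P⁻¹ : Matrix (Fin n) (Fin n) ℂ) * (P : Matrix (Fin n) (Fin n) ℂ) = 1 := by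
    rw [← Units.val_mul, inv_mul_cancel, Units.val_one]
  set f : Matrix (Fin n) (Fin n) ℂ →+* Matrix (Fin n) (Fin n) ℂ[X] :=
    (C : ℂ →+* ℂ[X]).mapMatrix with hf
  have h1 : f ↑P * f (↑P⁻¹ : Matrix (Fin n) (Fin n) ℂ) = 1 := by rw [← _root_.map_mul, hPQ, _root_.map_one]
  have key : charmatrix ((P : Matrix (Fin n) (Fin n) ℂ) * M * (↑P⁻¹ : Matrix (Fin n) (Fin n) ℂ))
      = f ↑P * charmatrix M * f (↑P⁻¹ : Matrix (Fin n) (Fin n) ℂ) := by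
    show Matrix.scalar (Fin n) (X : ℂ[X]) - f _ = _
    rw [_root_.map_mul, _root_.map_mul]
    show _ = f ↑P * (Matrix.scalar (Fin n) (X : ℂ[X]) - f M) * f (↑P⁻¹ : Matrix (Fin n) (Fin n) ℂ)
    rw [mul_sub, sub_mul]
    congr 1
    calc Matrix.scalar (Fin n) (X : ℂ[X])
        = Matrix.scalar (Fin n) (X : ℂ[X]) * (f ↑P * f (↑P⁻¹ : Matrix (Fin n) (Fin n) ℂ)) := by
          rw [h1, mul_one]
      _ = f ↑P * Matrix.scalar (Fin n) (X : ℂ[X]) * f (↑P⁻¹ : Matrix (Fin n) (Fin n) ℂ) := by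
          rw [← mul_assoc, (Matrix.scalar_commute (X : ℂ[X]) (Commute.all X) (f ↑P))]
  rw [Matrix.charpoly, key, det_mul, det_mul, Matrix.charpoly]
  have : (f (↑P : Matrix (Fin n) (Fin n) ℂ)).det * (f (↑P⁻¹ : Matrix (Fin n) (Fin n) ℂ)).det = 1 := by
    rw [← Matrix.det_mul, h1, det_one]
  calc (f ↑P).det * (charmatrix M).det * (f (↑P⁻¹ : Matrix (Fin n) (Fin n) ℂ)).det
      = (charmatrix M).det * ((f ↑P).det * (f (↑P⁻¹ : Matrix (Fin n) (Fin n) ℂ)).det) := by ring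
    _ = (charmatrix M).det := by rw [this, mul_one]


/-- A subgroup of the invertible upper triangular matrices in which every element is
diagonalizable is abelian. -/
theorem upperTriangular_diagonalizable_abelian {n : ℕ}
    (G : Subgroup (GL (Fin n) ℂ))
    (hut : ∀ g ∈ G, ((g : Matrix (Fin n) (Fin n) ℂ)).BlockTriangular id)
    (hdiag : ∀ g ∈ G, IsDiagonalizable (g : Matrix (Fin n) (Fin n) ℂ)) :
    ∀ a ∈ G, ∀ b ∈ G, a * b = b * a := by


  intro a ha b hb
  rw [← commutatorElement_eq_one_iff_mul_comm]
  set c := @Bracket.bracket (GL (Fin n) ℂ) (GL (Fin n) ℂ) commutatorElement a b with hc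
  have hcG : c ∈ G := by
    rw [hc, commutatorElement_def]
    exact mul_mem (mul_mem (mul_mem ha hb) (inv_mem ha)) (inv_mem hb)
  have htri : (c : Matrix (Fin n) (Fin n) ℂ).BlockTriangular id := hut c hcG
  have wA := hut a ha
  have wB := hut b hb
  have wA' := hut a⁻¹ (inv_mem ha)
  have wB' := hut b⁻¹ (inv_mem hb)
  have hdiagc : ∀ i, (c : Matrix (Fin n) (Fin n) ℂ) i i = 1 := by
    intro i
    have e1 : (↑a : Matrix (Fin n) (Fin n) ℂ) i i * (↑a⁻¹ : Matrix (Fin n) (Fin n) ℂ) i i = 1 := by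
      rw [← diag_mul_tri wA wA', ← Units.val_mul, mul_inv_cancel, Units.val_one,
        Matrix.one_apply_eq]
    have e2 : (↑b : Matrix (Fin n) (Fin n) ℂ) i i * (↑b⁻¹ : Matrix (Fin n) (Fin n) ℂ) i i = 1 := by
      rw [← diag_mul_tri wB wB', ← Units.val_mul, mul_inv_cancel, Units.val_one,
        Matrix.one_apply_eq]
    have hcval : (c : Matrix (Fin n) (Fin n) ℂ)
        = (↑a : Matrix (Fin n) (Fin n) ℂ) * (↑b : Matrix (Fin n) (Fin n) ℂ)
          * (↑a⁻¹ : Matrix (Fin n) (Fin n) ℂ) * (↑b⁻¹ : Matrix (Fin n) (Fin n) ℂ) := by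
      rw [hc, commutatorElement_def, Units.val_mul, Units.val_mul, Units.val_mul]
    rw [hcval, diag_mul_tri ((wA.mul wB).mul wA') wB', diag_mul_tri (wA.mul wB) wA',
      diag_mul_tri wA wB]
    calc (↑a : Matrix (Fin n) (Fin n) ℂ) i i * (↑b : Matrix (Fin n) (Fin n) ℂ) i i
          * (↑a⁻¹ : Matrix (Fin n) (Fin n) ℂ) i i * (↑b⁻¹ : Matrix (Fin n) (Fin n) ℂ) i i
        = ((↑a : Matrix (Fin n) (Fin n) ℂ) i i * (↑a⁻¹ : Matrix (Fin n) (Fin n) ℂ) i i)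
          * ((↑b : Matrix (Fin n) (Fin n) ℂ) i i * (↑b⁻¹ : Matrix (Fin n) (Fin n) ℂ) i i) := by
          ring
      _ = 1 := by rw [e1, e2, one_mul]
  have hcp : (c : Matrix (Fin n) (Fin n) ℂ).charpoly = (X - C 1) ^ n := by
    rw [charpoly_of_upperTriangular _ htri]
    simp only [hdiagc]
    rw [Finset.prod_const, Finset.card_univ, Fintype.card_fin]
  obtain ⟨P, hP⟩ := hdiag c hcG
  set D := (↑P : Matrix (Fin n) (Fin n) ℂ) * (↑c : Matrix (Fin n) (Fin n) ℂ) * (↑P⁻¹ : Matrix (Fin n) (Fin n) ℂ) with hD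
  have hDcp : D.charpoly = (X - C 1) ^ n := by rw [hD, charpoly_conj]; exact hcp
  have hDtri : D.BlockTriangular id := fun i j h => hP (ne_of_gt h)
  have hDdiag : ∀ i, D i i = 1 := by
    have h2 : D.charpoly = ∏ i : Fin n, (X - C (D i i)) := charpoly_of_upperTriangular _ hDtri
    rw [hDcp] at h2
    have h3 : (∏ i : Fin n, (X - C (D i i)))
        = ((Finset.univ.val.map fun i => D i i).map fun a => X - C a).prod := by
      rw [Multiset.map_map]; rfl
    rw [h3] at h2
    have h4 := congrArg Polynomial.roots h2
    rw [roots_pow, roots_X_sub_C, roots_multiset_prod_X_sub_C] at h4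
    intro i
    have h5 : D i i ∈ (n • ({1} : Multiset ℂ)) := by
      rw [h4]
      exact Multiset.mem_map_of_mem _ (Finset.mem_univ i)
    rw [Multiset.nsmul_singleton] at h5
    exact Multiset.eq_of_mem_replicate h5
  have hD1 : D = 1 := by
    ext i j
    by_cases h : i = j
    · subst h; rw [hDdiag, Matrix.one_apply_eq]
    · rw [hP h, Matrix.one_apply_ne h]
  have hPcP : P * c * P⁻¹ = 1 := by
    apply Units.ext
    rw [Units.val_mul, Units.val_mul, Units.val_one]
    exact hD ▸ hD1
  calc c = P⁻¹ * (P * c * P⁻¹) * P := by group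
    _ = 1 := by rw [hPcP]; group
end

section
/- Suppose a subgroup G of GL_n(ℂ) contains a non-diagonalizable matrix. Then there is a rational function h on GL_n(ℂ) × GL_n(ℂ) (a quotient of polynomial functions of the matrix entries) such that h(G × G) ∩ ℝ contains ℚ_{>0}; in particular h(G × G) is dense in ℝ_{>0}. -/
/-!
An invertible non-diagonalizable `a` has a Jordan chain `a w = μ w`, `a v = μ (v + w)` with
`μ ≠ 0`, so `a ^ k v = μ ^ k (v + k w)`. Shifting `v` by a multiple of `w` so that `v i = 0` at a
coordinate with `w i ≠ 0`, the linear forms `φ g = (g v) i` and `ψ g = (g w) i` satisfy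
`φ (a ^ k) = k ψ (a ^ k)` with `ψ (a ^ k) ≠ 0`. Hence `h (g, g') = φ g ψ g' / (φ g' ψ g)` takes
the value `m / k` at `(a ^ m, a ^ k)`.
-/

open Matrix

/-- Evaluation of a polynomial in the `2n²` entries of a pair of matrices. -/
noncomputable def evalAt {n : ℕ}
    (P : MvPolynomial ((Fin n × Fin n) ⊕ (Fin n × Fin n)) ℂ)
    (g g' : Matrix (Fin n) (Fin n) ℂ) : ℂ :=
  MvPolynomial.eval (fun v => Sum.elim (fun p => g p.1 p.2) (fun p => g' p.1 p.2) v) P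

open Module End

theorem Module.End.pow_apply_of_apply_eq_smul {R M : Type*} [Semiring R]
    [AddCommMonoid M] [Module R M] {f : End R M} {μ : R} {w : M}
    (hw : f w = μ • w) (k : ℕ) : (f ^ k) w = μ ^ k • w := by
  induction k with
  | zero => simp
  | succ k ih => rw [pow_succ', Module.End.mul_apply, ih, map_smul, hw, smul_smul, pow_succ]

theorem Module.End.pow_apply_of_apply_eq_smul_add {R M : Type*} [CommSemiring R]
    [AddCommMonoid M] [Module R M] {f : End R M} {μ : R} {v w : M}
    (hw : f w = μ • w) (hv : f v = μ • (v + w)) (k : ℕ) :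
    (f ^ k) v = μ ^ k • (v + k • w) := by
  induction k with
  | zero => simp
  | succ k ih =>
    rw [pow_succ', Module.End.mul_apply, ih, map_smul, map_add, map_nsmul, hv, hw]
    module

section JordanChain

variable {R ι : Type*} [CommSemiring R] [Fintype ι] [DecidableEq ι] {A : Matrix ι ι R} {μ : R}
  {v w : ι → R}

theorem Matrix.pow_mulVec_of_mulVec_eq_smul (hw : A *ᵥ w = μ • w) (k : ℕ) :
    A ^ k *ᵥ w = μ ^ k • w := by
  simpa [← toLin'_pow] using pow_apply_of_apply_eq_smul (f := toLin' A) (by simpa using hw) k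

theorem Matrix.pow_mulVec_apply_eq_mul_of_jordanChain {i : ι} (hw : A *ᵥ w = μ • w)
    (hv : A *ᵥ v = μ • (v + w)) (hvi : v i = 0) (k : ℕ) :
    (A ^ k *ᵥ v) i = k * (A ^ k *ᵥ w) i := by
  have hv' := pow_apply_of_apply_eq_smul_add (f := toLin' A) (by simpa using hw)
    (by simpa using hv) k
  simp only [← toLin'_pow, toLin'_apply] at hv'
  simp [hv', pow_mulVec_of_mulVec_eq_smul hw, hvi, mul_left_comm]

end JordanChain

/-- Without such a chain `ker (f - μ) ^ 2 = ker (f - μ)` for every `μ`, so the kernels of the powers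
of `f - μ` are stationary from the start and every generalized eigenspace is an eigenspace. -/
theorem Module.End.exists_jordanChain_of_iSup_eigenspace_ne_top {K V : Type*} [Field K]
    [IsAlgClosed K] [AddCommGroup V] [Module K V] [FiniteDimensional K V] (f : End K V)
    (h : ⨆ μ, f.eigenspace μ ≠ ⊤) :
    ∃ μ : K, ∃ v w : V, w ≠ 0 ∧ f w = μ • w ∧ f v = μ • v + w := by
  contrapose! h
  rw [eq_top_iff, ← f.iSup_maxGenEigenspace_eq_top]
  refine iSup_mono fun μ => ?_
  set g := f - μ • 1
  have hker : LinearMap.ker (g ^ 1) = LinearMap.ker (g ^ 2) := by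
    refine le_antisymm (g.iterateKer.monotone (by norm_num)) fun x hx => ?_
    by_contra hgx
    refine h μ x (g x) (by simpa using hgx) ?_ ?_
    · simpa [g, sub_eq_zero, pow_two] using hx
    · simp [g]
  intro x hx
  obtain ⟨k, hk⟩ := (f.mem_maxGenEigenspace μ x).mp hx
  have := (ker_pow_constant hker k).ge (g.iterateKer.monotone (by omega : k ≤ 1 + k) hk)
  simpa [g, sub_eq_zero, mem_eigenspace_iff] using this

theorem LinearMap.isDiag_toMatrix_of_apply_eq_smul {R M ι : Type*} [CommSemiring R]
    [AddCommMonoid M] [Module R M] [Fintype ι] [DecidableEq ι] (b : Basis ι R M) {f : End R M}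
    (hf : ∀ j, ∃ μ : R, f (b j) = μ • b j) : (LinearMap.toMatrix b b f).IsDiag := by
  intro i j hij
  obtain ⟨μ, hμ⟩ := hf j
  simp [LinearMap.toMatrix_apply, hμ, Ne.symm hij]

theorem isDiagonalizable_of_iSup_eigenspace_eq_top {n : ℕ} {A : Matrix (Fin n) (Fin n) ℂ}
    (h : ⨆ μ, eigenspace A.toLin' μ = ⊤) : IsDiagonalizable A := by
  have hint := DirectSum.isInternal_submodule_of_iSupIndep_of_iSup_eq_top
    (eigenspaces_iSupIndep A.toLin') h
  let e := Pi.basisFun ℂ (Fin n)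
  let b₀ := hint.collectedBasis fun μ => Free.chooseBasis ℂ (eigenspace A.toLin' μ)
  let b := b₀.reindex (b₀.indexEquiv e)
  have hb : ∀ j, ∃ μ : ℂ, A.toLin' (b j) = μ • b j := fun j => by
    rw [Basis.reindex_apply]
    exact ⟨_, mem_eigenspace_iff.mp (hint.collectedBasis_mem _ _)⟩
  refine ⟨⟨b.toMatrix e, e.toMatrix b, b.toMatrix_mul_toMatrix_flip e,
    e.toMatrix_mul_toMatrix_flip b⟩, ?_⟩
  have hconj := basis_toMatrix_mul_linearMap_toMatrix_mul_basis_toMatrix b e b e A.toLin'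
  rw [LinearMap.toMatrix_eq_toMatrix', LinearMap.toMatrix'_toLin'] at hconj
  change (b.toMatrix e * A * e.toMatrix b).IsDiag
  exact hconj ▸ LinearMap.isDiag_toMatrix_of_apply_eq_smul b hb

theorem exists_normalized_jordanChain {n : ℕ} (a : GL (Fin n) ℂ)
    (ha : ¬ IsDiagonalizable (a : Matrix (Fin n) (Fin n) ℂ)) :
    ∃ (μ : ℂ) (v w : Fin n → ℂ) (i : Fin n), μ ≠ 0 ∧ w i ≠ 0 ∧ v i = 0 ∧
      (a : Matrix (Fin n) (Fin n) ℂ) *ᵥ w = μ • w ∧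
      (a : Matrix (Fin n) (Fin n) ℂ) *ᵥ v = μ • (v + w) := by
  obtain ⟨μ, u, w₀, hw₀, haw₀, hau⟩ := exists_jordanChain_of_iSup_eigenspace_ne_top _
    (mt isDiagonalizable_of_iSup_eigenspace_eq_top ha)
  rw [toLin'_apply] at haw₀ hau
  have hμ : μ ≠ 0 := by
    rintro rfl
    exact hw₀ (mulVec_injective_of_isUnit a.isUnit (by simpa using haw₀))
  set w := μ⁻¹ • w₀
  have haw : (a : Matrix (Fin n) (Fin n) ℂ) *ᵥ w = μ • w := by
    rw [mulVec_smul, haw₀, smul_comm]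
  have hau' : (a : Matrix (Fin n) (Fin n) ℂ) *ᵥ u = μ • (u + w) := by
    rw [hau, smul_add, smul_inv_smul₀ hμ]
  have hw : w ≠ 0 := smul_ne_zero (inv_ne_zero hμ) hw₀
  clear_value w
  obtain ⟨i, hwi⟩ := Function.ne_iff.mp hw
  refine ⟨μ, u - (u i / w i) • w, w, i, hμ, hwi, by simp [div_mul_cancel₀ _ hwi], haw, ?_⟩
  rw [mulVec_sub, mulVec_smul, haw, hau']
  module

noncomputable def mulVecPoly {R ι σ : Type*} [CommSemiring R] [Fintype ι] (e : ι × ι → σ)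
    (i : ι) (x : ι → R) : MvPolynomial σ R :=
  ∑ j, MvPolynomial.C (x j) * MvPolynomial.X (e (i, j))

section EvalAt

variable {n : ℕ} (g g' : Matrix (Fin n) (Fin n) ℂ)

theorem evalAt_mul (P Q : MvPolynomial ((Fin n × Fin n) ⊕ (Fin n × Fin n)) ℂ) :
    evalAt (P * Q) g g' = evalAt P g g' * evalAt Q g g' :=
  map_mul _ P Q

theorem evalAt_mulVecPoly_inl (i : Fin n) (x : Fin n → ℂ) :
    evalAt (mulVecPoly Sum.inl i x) g g' = (g *ᵥ x) i := by
  simp [evalAt, mulVecPoly, mulVec, dotProduct, mul_comm]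

theorem evalAt_mulVecPoly_inr (i : Fin n) (x : Fin n → ℂ) :
    evalAt (mulVecPoly Sum.inr i x) g g' = (g' *ᵥ x) i := by
  simp [evalAt, mulVecPoly, mulVec, dotProduct, mul_comm]

end EvalAt

theorem Rat.exists_eq_natCast_div_natCast_of_nonneg {K : Type*} [DivisionRing K] [CharZero K]
    {q : ℚ} (hq : 0 ≤ q) : ∃ m k : ℕ, 0 < k ∧ (q : K) = m / k :=
  ⟨q.num.natAbs, q.den, q.pos, by
    rw [Rat.cast_def, Nat.cast_natAbs, abs_of_nonneg (Rat.num_nonneg.mpr hq)]⟩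

/-- If a subgroup `G` of `GL_n(ℂ)` contains a non-diagonalizable matrix, then there is a
rational function `h = P/Q` of the matrix entries such that `h(G × G)` contains every
positive rational; in particular `h(G × G)` is dense in `ℝ_{>0}`. -/
theorem rational_function_dense_image {n : ℕ} (G : Subgroup (GL (Fin n) ℂ))
    (hnd : ∃ a ∈ G, ¬ IsDiagonalizable (a : Matrix (Fin n) (Fin n) ℂ)) :
    ∃ P Q : MvPolynomial ((Fin n × Fin n) ⊕ (Fin n × Fin n)) ℂ,
      ∀ q : ℚ, 0 < q → ∃ g ∈ G, ∃ g' ∈ G,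
        evalAt Q (g : Matrix (Fin n) (Fin n) ℂ) (g' : Matrix (Fin n) (Fin n) ℂ) ≠ 0 ∧
        evalAt P (g : Matrix (Fin n) (Fin n) ℂ) (g' : Matrix (Fin n) (Fin n) ℂ) /
          evalAt Q (g : Matrix (Fin n) (Fin n) ℂ) (g' : Matrix (Fin n) (Fin n) ℂ) = (q : ℂ) := by
  obtain ⟨a, haG, ha⟩ := hnd
  obtain ⟨μ, v, w, i, hμ, hwi, hvi, haw, hav⟩ := exists_normalized_jordanChain a ha
  refine ⟨mulVecPoly Sum.inl i v * mulVecPoly Sum.inr i w,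
    mulVecPoly Sum.inr i v * mulVecPoly Sum.inl i w, fun q hq => ?_⟩
  obtain ⟨m, k, hk, hq⟩ := Rat.exists_eq_natCast_div_natCast_of_nonneg (K := ℂ) hq.le
  refine ⟨a ^ m, pow_mem haG m, a ^ k, pow_mem haG k, ?_⟩
  simp only [evalAt_mul, evalAt_mulVecPoly_inl, evalAt_mulVecPoly_inr, Units.val_pow_eq_pow_val,
    pow_mulVec_apply_eq_mul_of_jordanChain haw hav hvi, pow_mulVec_of_mulVec_eq_smul haw,
    Pi.smul_apply, smul_eq_mul, hq]
  have hk' : (k : ℂ) ≠ 0 := by exact_mod_cast hk.ne'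
  refine ⟨by simp [hk', hμ, hwi], ?_⟩
  field_simp
end

section
/- Let Γ be a discrete subgroup of GL_n(ℂ) containing a finitely generated subgroup Γ' of exponential growth. Then Γ, as a subset of M_n(ℂ) ≅ ℝ^{2n²} with the Euclidean metric, has positive Assouad dimension. -/
/-!
A discrete subgroup of `GL_n` has a uniform gap `ε` around the identity, so two distinct
elements `g ≠ h` satisfy `ε ≤ ‖g⁻¹‖ ‖h - g‖`. Words of length `m` in a finite generating set
have `‖g‖, ‖g⁻¹‖ ≤ r ^ m`; hence the ball `S ^ m` gives at least `C ^ m` points of `Γ` whose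
diameter-to-separation ratio is at most `(2 / ε) (r ^ 2) ^ m`. Any `β < log_{r²} C` then
violates the Assouad bound `|A| ≤ K (diam A / sep A) ^ β` for large `m`.
-/

open Matrix
open scoped Matrix.Norms.L2Operator Pointwise

/-- The separation of a subset of a metric space: the infimum of distances between
distinct points. -/
noncomputable def sepDist {X : Type*} [MetricSpace X] (A : Set X) : ℝ :=
  sInf {r : ℝ | ∃ a ∈ A, ∃ b ∈ A, a ≠ b ∧ r = dist a b}

open Filter Metric Real Topology

section Assouad

variable {X : Type*} [MetricSpace X]

/-- Encodes `β₀ ≤ dim_A Y`. -/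
def AssouadDimGE (Y : Set X) (β₀ : ℝ) : Prop :=
  ∀ β K : ℝ, 0 < β → β < β₀ → 0 < K →
    ∃ A : Set X, A ⊆ Y ∧ A.Finite ∧ Bornology.IsBounded A ∧ 0 < sepDist A ∧ 2 ≤ A.ncard ∧
      K * (diam A / sepDist A) ^ β < (A.ncard : ℝ)

lemma le_sepDist {A : Set X} {δ : ℝ} (hA : A.Nontrivial)
    (h : ∀ x ∈ A, ∀ y ∈ A, x ≠ y → δ ≤ dist x y) : δ ≤ sepDist A := by
  obtain ⟨x, hx, y, hy, hxy⟩ := hA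
  refine le_csInf ⟨dist x y, x, hx, y, hy, hxy, rfl⟩ ?_
  rintro _ ⟨a, ha, b, hb, hab, rfl⟩
  exact h a ha b hb hab

lemma eventually_mul_pow_lt_pow {q C : ℝ} (K : ℝ) (hq : 0 < q) (hqC : q < C) :
    ∀ᶠ m : ℕ in atTop, K * q ^ m < C ^ m := by
  have hCq : 1 < C / q := (one_lt_div hq).mpr hqC
  filter_upwards [(tendsto_pow_atTop_atTop_of_one_lt hCq).eventually_gt_atTop K] with m hm
  rwa [div_pow, lt_div_iff₀ (pow_pos hq m)] at hm

theorem exists_pos_assouadDimGE_of_exponential_family {Y : Set X} {A : ℕ → Set X} {x₀ : X}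
    {C ρ D δ : ℝ} (hC : 1 < C) (hρ : 1 < ρ) (hD : 0 ≤ D) (hδ : 0 < δ)
    (hAY : ∀ m, A m ⊆ Y) (hfin : ∀ m, (A m).Finite)
    (hcard : ∀ᶠ m in atTop, C ^ m ≤ ((A m).ncard : ℝ))
    (hball : ∀ᶠ m in atTop, A m ⊆ closedBall x₀ (D * ρ ^ m))
    (hsep : ∀ᶠ m in atTop, ∀ x ∈ A m, ∀ y ∈ A m, x ≠ y → δ / ρ ^ m ≤ dist x y) :
    ∃ β₀ : ℝ, 0 < β₀ ∧ AssouadDimGE Y β₀ := by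
  have hρ2 : 1 < ρ ^ 2 := one_lt_pow₀ hρ two_ne_zero
  refine ⟨logb (ρ ^ 2) C, logb_pos hρ2 hC, fun β K hβ hβ₀ hK => ?_⟩
  have hq : (ρ ^ 2) ^ β < C := (lt_logb_iff_rpow_lt hρ2 (by linarith)).mp hβ₀
  obtain ⟨m, hm1, hmC, hmball, hmsep, hmK⟩ := ((eventually_ge_atTop 1).and <| hcard.and <|
    hball.and <| hsep.and <| eventually_mul_pow_lt_pow (K * (2 * D / δ) ^ β)
      (by positivity) hq).exists
  have hcard2 : 2 ≤ (A m).ncard := by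
    have : (1 : ℝ) < (A m).ncard := (hC.trans_le (le_self_pow₀ hC.le (by omega))).trans_le hmC
    exact_mod_cast this
  have hsepA : δ / ρ ^ m ≤ sepDist (A m) :=
    haveI := (hfin m).to_subtype
    le_sepDist (Set.one_lt_ncard_iff_nontrivial.mp hcard2) hmsep
  have hsepA0 : 0 < sepDist (A m) := (by positivity : 0 < δ / ρ ^ m).trans_le hsepA
  have hdiam : diam (A m) ≤ 2 * (D * ρ ^ m) :=
    (diam_mono hmball isBounded_closedBall).trans (diam_closedBall (by positivity))
  have hratio : diam (A m) / sepDist (A m) ≤ 2 * D / δ * (ρ ^ 2) ^ m :=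
    calc diam (A m) / sepDist (A m) ≤ 2 * (D * ρ ^ m) / (δ / ρ ^ m) :=
          div_le_div₀ (by positivity) hdiam (by positivity) hsepA
      _ = 2 * D / δ * (ρ ^ 2) ^ m := by field_simp; ring
  refine ⟨A m, hAY m, hfin m, (hfin m).isBounded, hsepA0, hcard2, ?_⟩
  calc K * (diam (A m) / sepDist (A m)) ^ β
      ≤ K * (2 * D / δ * (ρ ^ 2) ^ m) ^ β := by gcongr
    _ = K * (2 * D / δ) ^ β * ((ρ ^ 2) ^ β) ^ m := by
        rw [mul_rpow (by positivity) (by positivity), rpow_pow_comm (by positivity), mul_assoc]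
    _ < C ^ m := hmK
    _ ≤ (A m).ncard := hmC

end Assouad

lemma Set.Finite.pow {M : Type*} [Monoid M] {S : Set M} (hS : S.Finite) (m : ℕ) :
    (S ^ m).Finite := by
  induction m with
  | zero => simp
  | succ k ih => rw [pow_succ]; exact ih.mul hS

section Units

variable {R : Type*} [NormedRing R]

lemma exists_pos_forall_norm_sub_one_lt_eq_one [HasSummableGeomSeries R] (Γ : Subgroup Rˣ)
    [DiscreteTopology Γ] : ∃ ε > 0, ∀ g ∈ Γ, ‖(g : R) - 1‖ < ε → g = 1 := by
  have hemb : IsEmbedding fun g : Γ => ((g : Rˣ) : R) :=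
    Units.isOpenEmbedding_val.toIsEmbedding.comp IsEmbedding.subtypeVal
  have hone : ({1} : Set Γ) ∈ 𝓝 (1 : Γ) := (isOpen_discrete _).mem_nhds rfl
  rw [hemb.nhds_eq_comap] at hone
  obtain ⟨t, ht, hts⟩ := hone
  obtain ⟨ε, hε, hball⟩ := Metric.mem_nhds_iff.mp ht
  refine ⟨ε, hε, fun g hg hgε => ?_⟩
  have : (⟨g, hg⟩ : Γ) = 1 := hts (hball (by simpa [dist_eq_norm] using hgε))
  simpa using congrArg Subtype.val this

variable {Γ : Subgroup Rˣ} {ε : ℝ}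

lemma div_le_dist_of_norm_inv_le (hΓε : ∀ g ∈ Γ, ‖(g : R) - 1‖ < ε → g = 1) {g h : Rˣ}
    (hg : g ∈ Γ) (hh : h ∈ Γ) (hgh : g ≠ h) {M : ℝ} (hM : 0 < M)
    (hgM : ‖((g⁻¹ : Rˣ) : R)‖ ≤ M) : ε / M ≤ dist (g : R) h := by
  rw [div_le_iff₀ hM, dist_comm, dist_eq_norm, mul_comm]
  by_contra! hlt
  refine hgh (inv_mul_eq_one.mp (hΓε _ (mul_mem (inv_mem hg) hh) ?_))
  calc ‖((g⁻¹ * h : Rˣ) : R) - 1‖ = ‖((g⁻¹ : Rˣ) : R) * ((h : R) - g)‖ := by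
        rw [mul_sub, Units.val_mul, Units.inv_mul]
    _ ≤ ‖((g⁻¹ : Rˣ) : R)‖ * ‖(h : R) - g‖ := norm_mul_le _ _
    _ ≤ M * ‖(h : R) - g‖ := by gcongr
    _ < ε := hlt

lemma norm_val_le_pow_of_mem_pow {S : Set Rˣ} {r : ℝ} (hS : ∀ s ∈ S, ‖(s : R)‖ ≤ r)
    {m : ℕ} (hm : 1 ≤ m) {g : Rˣ} (hg : g ∈ S ^ m) : ‖(g : R)‖ ≤ r ^ m := by
  induction m, hm using Nat.le_induction generalizing g with
  | base => simpa using hS g (by simpa using hg)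
  | succ k hk ih =>
    rw [pow_succ] at hg
    obtain ⟨a, ha, b, hb, rfl⟩ := hg
    calc ‖((a * b : Rˣ) : R)‖ ≤ ‖(a : R)‖ * ‖(b : R)‖ := norm_mul_le _ _
      _ ≤ r ^ k * r := mul_le_mul (ih ha) (hS b hb) (norm_nonneg _)
          ((norm_nonneg _).trans (ih ha))
      _ = r ^ (k + 1) := (pow_succ r k).symm

lemma norm_val_inv_le_pow_of_mem_pow {S : Set Rˣ} {r : ℝ}
    (hS : ∀ s ∈ S, ‖((s⁻¹ : Rˣ) : R)‖ ≤ r) {m : ℕ} (hm : 1 ≤ m) {g : Rˣ} (hg : g ∈ S ^ m) :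
    ‖((g⁻¹ : Rˣ) : R)‖ ≤ r ^ m :=
  norm_val_le_pow_of_mem_pow (S := S⁻¹) (fun s hs => by simpa using hS _ hs) hm
    (by rwa [inv_pow, Set.inv_mem_inv])

end Units

theorem discrete_expGrowth_positive_assouad_general {n : ℕ} (Γ : Subgroup (GL (Fin n) ℂ))
    [DiscreteTopology Γ]
    (Γ' : Subgroup (GL (Fin n) ℂ)) (hle : Γ' ≤ Γ)
    (S : Set (GL (Fin n) ℂ)) (hfin : S.Finite)
    (hgen : Subgroup.closure S = Γ')
    (C : ℝ) (hC : 1 < C) (hgrowth : ∀ m : ℕ, 1 ≤ m → C ^ m ≤ ((S ^ m).ncard : ℝ)) :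
    ∃ β₀ : ℝ, 0 < β₀ ∧ ∀ β K : ℝ, 0 < β → β < β₀ → 0 < K →
      ∃ A : Set (Matrix (Fin n) (Fin n) ℂ),
        A ⊆ {M | ∃ g ∈ Γ, (g : Matrix (Fin n) (Fin n) ℂ) = M} ∧
        A.Finite ∧ Bornology.IsBounded A ∧ 0 < sepDist A ∧ 2 ≤ A.ncard ∧
        K * (Metric.diam A / sepDist A) ^ β < (A.ncard : ℝ) := by
  obtain ⟨ε, hε, hΓε⟩ := exists_pos_forall_norm_sub_one_lt_eq_one Γ
  obtain ⟨r, hr1, hr⟩ : ∃ r : ℝ, 1 < r ∧ ∀ s ∈ S, ‖(s : Matrix (Fin n) (Fin n) ℂ)‖ ≤ r ∧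
      ‖((s⁻¹ : GL (Fin n) ℂ) : Matrix (Fin n) (Fin n) ℂ)‖ ≤ r := by
    obtain ⟨r₀, hr₀⟩ := (hfin.image fun s : GL (Fin n) ℂ => max ‖(s : Matrix (Fin n) (Fin n) ℂ)‖
      ‖((s⁻¹ : GL (Fin n) ℂ) : Matrix (Fin n) (Fin n) ℂ)‖).bddAbove
    exact ⟨max r₀ 2, by simp, fun s hs =>
      max_le_iff.mp ((hr₀ (Set.mem_image_of_mem _ hs)).trans (le_max_left _ _))⟩
  have hSΓ : ∀ m, S ^ m ⊆ Γ := fun m =>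
    Subgroup.subset_closure.trans <| (Subgroup.closure_pow_le.trans hgen.le).trans hle
  refine exists_pos_assouadDimGE_of_exponential_family (A := fun m => Units.val '' (S ^ m))
    (x₀ := 0) (D := 1) (δ := ε) hC hr1 zero_le_one hε
    (fun m => Set.image_subset_iff.mpr fun g hg => ⟨g, hSΓ m hg, rfl⟩)
    (fun m => (hfin.pow m).image _) ?_ ?_ ?_ <;> filter_upwards [eventually_ge_atTop 1] with m hm
  · rw [Set.ncard_image_of_injective _ Units.val_injective]
    exact hgrowth m hm
  · rintro _ ⟨g, hg, rfl⟩
    simpa using norm_val_le_pow_of_mem_pow (fun s hs => (hr s hs).1) hm hg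
  · rintro _ ⟨g, hg, rfl⟩ _ ⟨h, hh, rfl⟩ hne
    exact div_le_dist_of_norm_inv_le hΓε (hSΓ m hg) (hSΓ m hh) (ne_of_apply_ne _ hne)
      (by positivity) (norm_val_inv_le_pow_of_mem_pow (fun s hs => (hr s hs).2) hm hg)

/-- If a discrete subgroup `Γ` of `GL_n(ℂ)` contains a finitely generated subgroup `Γ'` of
exponential growth, then `Γ`, viewed as a subset of the space of matrices (with a metric
bi-Lipschitz to the Euclidean one), has positive Assouad dimension: some `β₀ > 0` bounds
from below the infimum defining the Assouad dimension. -/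
theorem discrete_expGrowth_positive_assouad {n : ℕ} (Γ : Subgroup (GL (Fin n) ℂ))
    [DiscreteTopology Γ]
    (Γ' : Subgroup (GL (Fin n) ℂ)) (hle : Γ' ≤ Γ)
    (S : Set (GL (Fin n) ℂ)) (hfin : S.Finite) (hsym : S⁻¹ = S)
    (hgen : Subgroup.closure S = Γ')
    (C : ℝ) (hC : 1 < C) (hgrowth : ∀ m : ℕ, 1 ≤ m → C ^ m ≤ ((S ^ m).ncard : ℝ)) :
    ∃ β₀ : ℝ, 0 < β₀ ∧ ∀ β K : ℝ, 0 < β → β < β₀ → 0 < K →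
      ∃ A : Set (Matrix (Fin n) (Fin n) ℂ),
        A ⊆ {M | ∃ g ∈ Γ, (g : Matrix (Fin n) (Fin n) ℂ) = M} ∧
        A.Finite ∧ Bornology.IsBounded A ∧ 0 < sepDist A ∧ 2 ≤ A.ncard ∧
        K * (Metric.diam A / sepDist A) ^ β < (A.ncard : ℝ) :=
  discrete_expGrowth_positive_assouad_general Γ Γ' hle S hfin hgen C hC hgrowth
end

section
/- Let a ∈ GL_n(ℂ) be non-diagonalizable, with Jordan form containing a block of size ≥ 2 and eigenvalue λ ≠ 0, conjugated by b so that ba b⁻¹ is in Jordan form with first block of size m ≥ 2. Define h'(g,g') = (g_{12} g'_{22})/(g'_{12} g_{22}) (entries indexed from 1) and h(g,g') = h'(b g b⁻¹, b g' b⁻¹). Then h(a^i, a^j) = i/j for all integers i, j ≥ 1. -/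
/-!
Conjugating by `b`, the powers `b a^k b⁻¹` are the powers `J^k` of the Jordan form `J`. The
first two basis vectors form a Jordan chain, `J e₀ = λ e₀` and `J e₁ = e₀ + λ e₁`, so
`J^k e₁ = k λ^(k-1) e₀ + λ^k e₁`: the `(0,1)` entry of `J^k` is `k λ^(k-1)` and the `(1,1)`
entry is `λ^k`. In the quotient the powers of `λ ≠ 0` cancel and `i / j` remains.
-/

open Matrix

namespace Matrix

variable {ι R : Type*} [Fintype ι] [DecidableEq ι] [CommSemiring R]

theorem pow_succ_mulVec_of_jordan_chain {J : Matrix ι ι R} {lam : R} {v w : ι → R}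
    (hv : J *ᵥ v = lam • v) (hw : J *ᵥ w = v + lam • w) (k : ℕ) :
    J ^ (k + 1) *ᵥ w = ((k + 1 : R) * lam ^ k) • v + lam ^ (k + 1) • w := by
  induction k with
  | zero => simpa using hw
  | succ k ih =>
    rw [pow_succ', ← mulVec_mulVec, ih, mulVec_add, mulVec_smul, mulVec_smul, hv, hw]
    push_cast
    module

theorem pow_succ_apply_of_jordan_chain {J : Matrix ι ι R} {lam : R} {p q : ι}
    (hpq : p ≠ q) (hp : J.col p = lam • Pi.single p 1)
    (hq : J.col q = Pi.single p 1 + lam • Pi.single q 1) (k : ℕ) :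
    (J ^ (k + 1)) p q = (k + 1) * lam ^ k ∧ (J ^ (k + 1)) q q = lam ^ (k + 1) := by
  have hchain := pow_succ_mulVec_of_jordan_chain (J := J) (lam := lam) (v := Pi.single p 1)
    (w := Pi.single q 1) (by rw [mulVec_single_one, hp]) (by rw [mulVec_single_one, hq]) k
  rw [mulVec_single_one] at hchain
  exact ⟨by simpa [hpq] using congrFun hchain p, by simpa [hpq.symm] using congrFun hchain q⟩

end Matrix

section JordanLeadingBlock

variable {R : Type*} [CommSemiring R] {n m : ℕ} {J : Matrix (Fin n) (Fin n) R} {lam : R}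

theorem apply_of_jordan_leading_block
    (hblock : ∀ i j : Fin n, (i : ℕ) < m → (j : ℕ) < m →
      J i j = if (j : ℕ) = (i : ℕ) then lam else if (j : ℕ) = (i : ℕ) + 1 then 1 else 0)
    (hlower : ∀ i j : Fin n, m ≤ (i : ℕ) → (j : ℕ) < m → J i j = 0)
    (i : Fin n) {j : Fin n} (hj : (j : ℕ) < m) :
    J i j = if (j : ℕ) = (i : ℕ) then lam else if (j : ℕ) = (i : ℕ) + 1 then 1 else 0 := by
  by_cases hi : (i : ℕ) < m
  · exact hblock i j hi hj
  · rw [hlower i j (by omega) hj, if_neg (by omega), if_neg (by omega)]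

theorem jordan_chain_of_jordan_leading_block (hm : 2 ≤ m)
    (hblock : ∀ i j : Fin n, (i : ℕ) < m → (j : ℕ) < m →
      J i j = if (j : ℕ) = (i : ℕ) then lam else if (j : ℕ) = (i : ℕ) + 1 then 1 else 0)
    (hlower : ∀ i j : Fin n, m ≤ (i : ℕ) → (j : ℕ) < m → J i j = 0)
    {p q : Fin n} (hp : (p : ℕ) = 0) (hq : (q : ℕ) = 1) :
    J.col p = lam • Pi.single p 1 ∧ J.col q = Pi.single p 1 + lam • Pi.single q 1 := by
  constructor <;> funext l
  · rw [col_apply, apply_of_jordan_leading_block hblock hlower l (j := p) (by omega)]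
    simp only [Pi.smul_apply, Pi.single_apply, Fin.ext_iff, hp]
    split_ifs <;> first | omega | contradiction | simp
  · rw [col_apply, apply_of_jordan_leading_block hblock hlower l (j := q) (by omega)]
    simp only [Pi.add_apply, Pi.smul_apply, Pi.single_apply, Fin.ext_iff, hp, hq]
    split_ifs <;> first | omega | contradiction | simp

end JordanLeadingBlock

/-- Suppose `b a b⁻¹` is in Jordan form whose first block has size `m ≥ 2` and eigenvalue
`λ ≠ 0`.  With `h'(g,g') = (g₁₂ g'₂₂)/(g'₁₂ g₂₂)` (entries indexed from 1, i.e. `(0,1)` and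
`(1,1)` indexed from 0) and `h(g,g') = h'(b g b⁻¹, b g' b⁻¹)`, we have `h(a^i, a^j) = i/j`
for all `i, j ≥ 1`. -/
theorem rational_function_on_powers {n m : ℕ} (hm : 2 ≤ m) (hmn : m ≤ n)
    (a b : GL (Fin n) ℂ) (lam : ℂ) (hlam : lam ≠ 0)
    (hblock : ∀ i j : Fin n, (i : ℕ) < m → (j : ℕ) < m →
      ((b * a * b⁻¹ : GL (Fin n) ℂ) : Matrix (Fin n) (Fin n) ℂ) i j =
        if (j : ℕ) = (i : ℕ) then lam else if (j : ℕ) = (i : ℕ) + 1 then 1 else 0)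
    (hoff : ∀ i j : Fin n,
      (((i : ℕ) < m ∧ m ≤ (j : ℕ)) ∨ (m ≤ (i : ℕ) ∧ (j : ℕ) < m)) →
      ((b * a * b⁻¹ : GL (Fin n) ℂ) : Matrix (Fin n) (Fin n) ℂ) i j = 0) :
    ∀ i j : ℕ, 1 ≤ i → 1 ≤ j →
      (((b * a ^ i * b⁻¹ : GL (Fin n) ℂ) : Matrix (Fin n) (Fin n) ℂ)
          ⟨0, by omega⟩ ⟨1, by omega⟩ *
        ((b * a ^ j * b⁻¹ : GL (Fin n) ℂ) : Matrix (Fin n) (Fin n) ℂ)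
          ⟨1, by omega⟩ ⟨1, by omega⟩) /
      (((b * a ^ j * b⁻¹ : GL (Fin n) ℂ) : Matrix (Fin n) (Fin n) ℂ)
          ⟨0, by omega⟩ ⟨1, by omega⟩ *
        ((b * a ^ i * b⁻¹ : GL (Fin n) ℂ) : Matrix (Fin n) (Fin n) ℂ)
          ⟨1, by omega⟩ ⟨1, by omega⟩) = (i : ℂ) / (j : ℂ) := by
  have hpow (k : ℕ) : ((b * a ^ k * b⁻¹ : GL (Fin n) ℂ) : Matrix (Fin n) (Fin n) ℂ) =
      ((b * a * b⁻¹ : GL (Fin n) ℂ) : Matrix (Fin n) (Fin n) ℂ) ^ k := by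
    rw [← conj_pow, Units.val_pow_eq_pow_val]
  obtain ⟨hcol₀, hcol₁⟩ := jordan_chain_of_jordan_leading_block (p := ⟨0, by omega⟩)
    (q := ⟨1, by omega⟩) hm hblock (fun i j hi hj ↦ hoff i j (.inr ⟨hi, hj⟩)) rfl rfl
  have hentries := pow_succ_apply_of_jordan_chain (by simp [Fin.ext_iff]) hcol₀ hcol₁
  intro i j hi hj
  obtain ⟨i, rfl⟩ : ∃ i', i = i' + 1 := ⟨i - 1, by omega⟩
  obtain ⟨j, rfl⟩ : ∃ j', j = j' + 1 := ⟨j - 1, by omega⟩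
  obtain ⟨hi₀₁, hi₁₁⟩ := hentries i
  obtain ⟨hj₀₁, hj₁₁⟩ := hentries j
  rw [hpow, hpow, hi₀₁, hi₁₁, hj₀₁, hj₁₁]
  push_cast
  field_simp
  ring
end
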